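/- Uniqueness of the r-decomposition. Let r be a positive integer and let λ/μ be an r-decomposable skew partition. Then the chain of partitions μ = γ⁽⁰⁾ ⊆ γ⁽¹⁾ ⊆ … ⊆ γ⁽ᵈ⁾ = λ such that each γ⁽ⁱ⁾/γ⁽ⁱ⁻¹⁾ is an r-border strip and t(γ⁽¹⁾/γ⁽⁰⁾) ≥ t(γ⁽²⁾/γ⁽¹⁾) ≥ … ≥ t(γ⁽ᵈ⁾/γ⁽ᵈ⁻¹⁾) is unique (in particular the length d is determined, d = (|λ| − |μ|)/r). -/

import Mathlib

open MvPolynomial Finset Classical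

noncomputable section

/-- A partition: an antitone finitely supported function `ℕ → ℕ`.
`l.part i` is the `(i+1)`-st part `λ_{i+1}` (0-based indexing). -/
def Ptn : Type := {f : ℕ →₀ ℕ // Antitone (f : ℕ → ℕ)}

namespace Ptn

/-- `l.part i = λ_{i+1}` (0-based indexing of the parts). -/
def part (l : Ptn) (i : ℕ) : ℕ := l.1 i

/-- The size `|λ|`. -/
def size (l : Ptn) : ℕ := l.1.sum fun _ v => v

/-- `Sub m l` means `μ ⊆ λ` (containment of Young diagrams). -/
def Sub (m l : Ptn) : Prop := ∀ i, m.part i ≤ l.part i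

/-- The Young diagram (0-based): box `(i,j)` corresponds to row `i+1`, column `j+1`. -/
def cells (l : Ptn) : Set (ℕ × ℕ) := {c | c.2 < l.part c.1}

/-- The Young diagram of the skew partition `λ/μ`. -/
def skew (m l : Ptn) : Set (ℕ × ℕ) := l.cells \ m.cells

/-- The top `t(λ/μ)`: `0` if `λ = μ` and otherwise the least (1-based) `i` with `λ_i ≠ μ_i`. -/
def top (m l : Ptn) : ℕ := if m = l then 0 else sInf {i | m.part i ≠ l.part i} + 1

/-- The bottom `b(λ/μ)`: `0` if `λ = μ` and otherwise the greatest (1-based) `i` with `λ_i ≠ μ_i`. -/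
def bot (m l : Ptn) : ℕ := if m = l then 0 else sSup {i | m.part i ≠ l.part i} + 1

end Ptn

/-- Two boxes are edge-adjacent (horizontally or vertically). -/
def Adjacent (c d : ℕ × ℕ) : Prop :=
  (c.1 = d.1 ∧ (c.2 + 1 = d.2 ∨ d.2 + 1 = c.2)) ∨
  (c.2 = d.2 ∧ (c.1 + 1 = d.1 ∨ d.1 + 1 = c.1))

/-- A set of boxes is connected via edge-adjacency. -/
def ConnectedSet (S : Set (ℕ × ℕ)) : Prop :=
  ∀ c ∈ S, ∀ d ∈ S, Relation.ReflTransGen (fun x y => y ∈ S ∧ Adjacent x y) c d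

/-- `λ/μ` is an `r`-border strip. -/
def IsBorderStrip (r : ℕ) (m l : Ptn) : Prop :=
  Ptn.Sub m l ∧ l.size = m.size + r ∧ ConnectedSet (Ptn.skew m l) ∧
    ∀ c ∈ Ptn.skew m l, (c.1 + 1, c.2 + 1) ∉ Ptn.skew m l

/-- The sign `(-1)^(b(λ/μ) - t(λ/μ))` of a border strip `λ/μ`. -/
def stripSgn (m l : Ptn) : ℤ := (-1) ^ (Ptn.bot m l - Ptn.top m l)

/-- A chain `μ = γ⁽⁰⁾ ⊆ … ⊆ γ⁽ᵈ⁾ = λ` of `r`-border strips with non-increasing tops. -/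
def RChain (r : ℕ) (m l : Ptn) (d : ℕ) (γ : ℕ → Ptn) : Prop :=
  γ 0 = m ∧ γ d = l ∧ (∀ i < d, IsBorderStrip r (γ i) (γ (i + 1))) ∧
    ∀ i, i + 1 < d → Ptn.top (γ (i + 1)) (γ (i + 2)) ≤ Ptn.top (γ i) (γ (i + 1))

/-- `λ/μ` is `r`-decomposable. -/
def RDecomposable (r : ℕ) (m l : Ptn) : Prop := ∃ d γ, RChain r m l d γ

/-- `sgn_r(λ/μ)`: the product of the signs of the border strips in a decomposition chain,
or `0` if `λ/μ` is not `r`-decomposable. -/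
def sgnr (r : ℕ) (m l : Ptn) : ℤ :=
  if h : RDecomposable r m l then
    ∏ i ∈ Finset.range h.choose,
      stripSgn (h.choose_spec.choose i) (h.choose_spec.choose (i + 1))
  else 0

/-- The alternant `a_{λ+δ(N)} = det(x_i^{λ_j + N - j})`. -/
def altPoly (N : ℕ) (l : Ptn) : MvPolynomial (Fin N) ℤ :=
  Matrix.det (Matrix.of fun i j : Fin N =>
    (X i : MvPolynomial (Fin N) ℤ) ^ (l.part j + (N - 1 - (j : ℕ))))

/-- The compositions of `m` of length `N`. -/
def comps (N m : ℕ) : Finset (Fin N → ℕ) :=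
  (Fintype.piFinset fun _ => Finset.range (m + 1)).filter fun β => ∑ i, β i = m

/-- The complete homogeneous symmetric polynomial `h_m` in `N` variables. -/
def hPoly (N m : ℕ) : MvPolynomial (Fin N) ℤ :=
  ∑ β ∈ comps N m, ∏ i, X i ^ β i

/-- The power sum `p_r` in `N` variables. -/
def pPoly (N r : ℕ) : MvPolynomial (Fin N) ℤ :=
  ∑ i : Fin N, X i ^ r

/-- The plethysm `p_r ∘ h_m = Σ_{β ∈ Com_N(m)} x^{rβ}` in `N` variables. -/
def prhm (N r m : ℕ) : MvPolynomial (Fin N) ℤ :=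
  ∑ β ∈ comps N m, ∏ i, X i ^ (r * β i)

/-- A labelled abacus with `N` beads: a sequence `w : ℕ → ℕ` whose nonzero entries are
precisely `1, …, N`, each occurring exactly once. -/
structure Abacus (N : ℕ) where
  w : ℕ → ℕ
  w_le : ∀ i, w i ≤ N
  uniq : ∀ B : ℕ, 1 ≤ B → B ≤ N → ∃! i, w i = B

namespace Abacus

variable {N : ℕ}

/-- `a.pos B` is the position `w⁻¹(B+1)` of bead `B+1` (beads indexed by `Fin N`, 0-based:
`B : Fin N` stands for the bead labelled `B+1`). -/
def pos (a : Abacus N) (B : Fin N) : ℕ :=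
  (a.uniq ((B : ℕ) + 1) (Nat.le_add_left 1 B) B.isLt).choose

lemma pos_spec (a : Abacus N) (B : Fin N) : a.w (a.pos B) = (B : ℕ) + 1 :=
  (a.uniq ((B : ℕ) + 1) (Nat.le_add_left 1 B) B.isLt).choose_spec.1

lemma pos_injective (a : Abacus N) : Function.Injective a.pos := by
  intro B C h
  have hB := a.pos_spec B
  have hC := a.pos_spec C
  rw [h, hC] at hB
  exact Fin.ext (by omega)

/-- The support of a labelled abacus: the set of occupied positions. -/
def suppF (a : Abacus N) : Finset ℕ := Finset.image a.pos Finset.univ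

lemma card_suppF (a : Abacus N) : a.suppF.card = N := by
  rw [suppF, Finset.card_image_of_injective _ a.pos_injective, Finset.card_univ,
    Fintype.card_fin]

/-- `a.iota t` is `ι_{t+1}(w)`, the `(t+1)`-st largest occupied position (`t : Fin N`, 0-based). -/
def iota (a : Abacus N) (t : Fin N) : ℕ :=
  (Finset.sort a.suppF (· ≤ ·)).getD (N - 1 - (t : ℕ)) 0

lemma length_sort_suppF (a : Abacus N) : (Finset.sort a.suppF (· ≤ ·)).length = N := by
  rw [Finset.length_sort, a.card_suppF]

lemma iota_mem (a : Abacus N) (t : Fin N) : a.iota t ∈ a.suppF := by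
  have hlt : N - 1 - (t : ℕ) < (Finset.sort a.suppF (· ≤ ·)).length := by
    rw [a.length_sort_suppF]
    have := t.isLt
    omega
  rw [iota, List.getD_eq_getElem _ _ hlt]
  exact (Finset.mem_sort (α := ℕ) (· ≤ ·)).mp (List.getElem_mem hlt)

lemma iota_injective (a : Abacus N) : Function.Injective a.iota := by
  intro t t' h
  have hn : (Finset.sort a.suppF (· ≤ ·)).Nodup := Finset.sort_nodup _ _
  have h1 : N - 1 - (t : ℕ) < (Finset.sort a.suppF (· ≤ ·)).length := by
    rw [a.length_sort_suppF]; have := t.isLt; omega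
  have h2 : N - 1 - (t' : ℕ) < (Finset.sort a.suppF (· ≤ ·)).length := by
    rw [a.length_sort_suppF]; have := t'.isLt; omega
  rw [iota, iota, List.getD_eq_getElem _ _ h1, List.getD_eq_getElem _ _ h2] at h
  have := (List.Nodup.getElem_inj_iff hn (hi := h1) (hj := h2)).mp h
  have ht := t.isLt
  have ht' := t'.isLt
  exact Fin.ext (by omega)

lemma one_le_w_iota (a : Abacus N) (t : Fin N) : 1 ≤ a.w (a.iota t) := by
  obtain ⟨B, -, hB⟩ := Finset.mem_image.mp (a.iota_mem t)
  rw [← hB, a.pos_spec]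
  omega

/-- The permutation `σ_w ∈ S_N` (on `Fin N`, 0-based): `σ_w(B) = w_{ι_{B+1}(w)}`. -/
def sigma (a : Abacus N) : Equiv.Perm (Fin N) :=
  Equiv.ofBijective
    (fun t => (⟨a.w (a.iota t) - 1, by
        have h1 := a.one_le_w_iota t
        have h2 := a.w_le (a.iota t)
        omega⟩ : Fin N))
    (Finite.injective_iff_bijective.mp (by
      intro t t' h
      have h1 := a.one_le_w_iota t
      have h1' := a.one_le_w_iota t'
      have hv : a.w (a.iota t) = a.w (a.iota t') := by
        have := congrArg Fin.val h
        simp only at this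
        omega
      have hu := a.uniq (a.w (a.iota t)) h1 (a.w_le _)
      obtain ⟨i, -, hi⟩ := hu
      have e1 := hi (a.iota t) rfl
      have e2 := hi (a.iota t') hv.symm
      exact a.iota_injective (e1.trans e2.symm)))

/-- The sign `sgn(w)` of a labelled abacus: the sign of `σ_w`. -/
def sgn (a : Abacus N) : ℤ := Equiv.Perm.sign a.sigma

/-- The weight `wt(w) = ∏_{i ∈ supp(w)} x_{w_i}^i`: the variable `X B` is `x_{B+1}`. -/
def wt (a : Abacus N) : MvPolynomial (Fin N) ℤ :=
  ∏ B : Fin N, X B ^ a.pos B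


end Abacus

namespace Abacus

variable {N : ℕ}

/-- `a.HasShape l` says that the shape `sh(w) = (ι_1(w) - (N-1), ι_2(w) - (N-2), …, ι_N(w))`
of the abacus equals the partition `l` (stated additively: `ι_{t+1}(w) = l_{t+1} + (N-1-t)`). -/
def HasShape (a : Abacus N) (l : Ptn) : Prop :=
  (∀ t : Fin N, l.part t + (N - 1 - (t : ℕ)) = a.iota t) ∧ ∀ i, N ≤ i → l.part i = 0

end Abacus

/-- `IsRMove r a a' i`: the abacus `a'` is obtained from `a` by `r`-moving the bead
at position `i` (to position `i + r`). -/
def IsRMove {N : ℕ} (r : ℕ) (a a' : Abacus N) (i : ℕ) : Prop :=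
  a.w i ≠ 0 ∧ a.w (i + r) = 0 ∧ a'.w i = 0 ∧ a'.w (i + r) = a.w i ∧
    ∀ j, j ≠ i → j ≠ i + r → a'.w j = a.w j

/-- `SeriesRMoves r m a a' idx`: the abacus `a'` is obtained from `a` by a series of `m`
`r`-moves of beads from positions `idx 0 < idx 1 < … < idx (m-1)`. -/
def SeriesRMoves {N : ℕ} (r m : ℕ) (a a' : Abacus N) (idx : Fin m → ℕ) : Prop :=
  StrictMono idx ∧ ∃ v : Fin (m + 1) → Abacus N, v 0 = a ∧ v (Fin.last m) = a' ∧
    ∀ j : Fin m, IsRMove r (v j.castSucc) (v j.succ) (idx j)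

/-- The set `K_N^{r,m}(μ,λ)`: sequences `(w⁽⁰⁾, …, w⁽ᵐ⁾)` of labelled abaci with `N` beads,
of shapes `μ` and `λ` at the two ends, where `w⁽ʲ⁾` is obtained from `w⁽ʲ⁻¹⁾` by `r`-moving
a bead from position `i_j`, with `i_1 < i_2 < … < i_m`. -/
def KSet (N r m : ℕ) (mu lam : Ptn) (v : Fin (m + 1) → Abacus N) : Prop :=
  (v 0).HasShape mu ∧ (v (Fin.last m)).HasShape lam ∧
    ∃ idx : Fin m → ℕ, StrictMono idx ∧
      ∀ j : Fin m, IsRMove r (v j.castSucc) (v j.succ) (idx j)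

/-- Bead `B+1` is left-`r`-mobile in `a`: its position is at least `r` and the position `r`
steps to the left is empty. -/
def IsLeftRMobile {N : ℕ} (a : Abacus N) (r : ℕ) (B : Fin N) : Prop :=
  r ≤ a.pos B ∧ a.w (a.pos B - r) = 0

/-- `IsLeftRMove a r B a'`: the abacus `a'` is obtained from `a` by `r`-moving bead `B+1`
leftwards. -/
def IsLeftRMove {N : ℕ} (a : Abacus N) (r : ℕ) (B : Fin N) (a' : Abacus N) : Prop :=
  r ≤ a.pos B ∧ a'.w (a.pos B - r) = (B : ℕ) + 1 ∧ a'.w (a.pos B) = 0 ∧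
    ∀ j, j ≠ a.pos B - r → j ≠ a.pos B → a'.w j = a.w j

section RChainUnique

/-- The set of (0-based) rows where `m` and `l` differ. -/
def DSet (m l : Ptn) : Set ℕ := {i | m.part i ≠ l.part i}

lemma mem_DSet {m l : Ptn} {i : ℕ} : i ∈ DSet m l ↔ m.part i ≠ l.part i := Iff.rfl

lemma Ptn.ext' {m l : Ptn} (h : ∀ i, m.part i = l.part i) : m = l :=
  Subtype.ext (Finsupp.ext h)

lemma DSet_bdd (m l : Ptn) : BddAbove (DSet m l) := by
  apply Set.Finite.bddAbove
  apply Set.Finite.subset (Finset.finite_toSet (m.1.support ∪ l.1.support))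
  intro i hi
  simp only [Finset.coe_union, Set.mem_union, Finset.mem_coe, Finsupp.mem_support_iff]
  by_contra h
  push_neg at h
  exact hi (show m.part i = l.part i by
    show m.1 i = l.1 i
    rw [h.1, h.2])

lemma DSet_nonempty {m l : Ptn} (h : m ≠ l) : (DSet m l).Nonempty := by
  by_contra h'
  exact h (Ptn.ext' fun i => not_ne_iff.mp fun hi => h' ⟨i, hi⟩)

lemma eq_of_lt_sInf {m l : Ptn} {i : ℕ} (h : i < sInf (DSet m l)) : m.part i = l.part i := by
  by_contra hne
  exact absurd (Nat.sInf_le (show i ∈ DSet m l from hne)) (by omega)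

lemma eq_of_sSup_lt {m l : Ptn} {i : ℕ} (h : sSup (DSet m l) < i) : m.part i = l.part i := by
  by_contra hne
  exact absurd (le_csSup (DSet_bdd m l) (show i ∈ DSet m l from hne)) (by omega)

lemma mem_skew {m l : Ptn} {c : ℕ × ℕ} :
    c ∈ Ptn.skew m l ↔ m.part c.1 ≤ c.2 ∧ c.2 < l.part c.1 := by
  simp [Ptn.skew, Ptn.cells, Set.mem_diff, Set.mem_setOf_eq, not_lt, and_comm]

lemma strip_ne {r : ℕ} (hr : 0 < r) {m l : Ptn} (hs : IsBorderStrip r m l) : m ≠ l := by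
  intro h
  have h2 := hs.2.1
  rw [h] at h2
  omega

lemma strip_sInf_le_sSup {r : ℕ} (hr : 0 < r) {m l : Ptn} (hs : IsBorderStrip r m l) :
    sInf (DSet m l) ≤ sSup (DSet m l) :=
  Nat.sInf_le (Nat.sSup_mem (DSet_nonempty (strip_ne hr hs)) (DSet_bdd m l))

lemma strip_row_lt {r : ℕ} (hr : 0 < r) {m l : Ptn} (hs : IsBorderStrip r m l) {i : ℕ}
    (h1 : sInf (DSet m l) ≤ i) (h2 : i ≤ sSup (DSet m l)) : m.part i < l.part i := by
  have hne := strip_ne hr hs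
  have htmem : m.part (sInf (DSet m l)) ≠ l.part (sInf (DSet m l)) :=
    Nat.sInf_mem (DSet_nonempty hne)
  have hbmem : m.part (sSup (DSet m l)) ≠ l.part (sSup (DSet m l)) :=
    Nat.sSup_mem (DSet_nonempty hne) (DSet_bdd m l)
  rcases lt_or_eq_of_le (hs.1 i) with h | h
  · exact h
  exfalso
  have ht : sInf (DSet m l) < i := by
    rcases lt_or_eq_of_le h1 with h' | h'
    · exact h'
    · exfalso; rw [h'] at htmem; exact htmem h
  have hb : i < sSup (DSet m l) := by
    rcases lt_or_eq_of_le h2 with h' | h'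
    · exact h'
    · exfalso; rw [← h'] at hbmem; exact hbmem h
  have hct : ((sInf (DSet m l), m.part (sInf (DSet m l))) : ℕ × ℕ) ∈ Ptn.skew m l :=
    mem_skew.mpr ⟨le_rfl, lt_of_le_of_ne (hs.1 _) htmem⟩
  have hcb : ((sSup (DSet m l), m.part (sSup (DSet m l))) : ℕ × ℕ) ∈ Ptn.skew m l :=
    mem_skew.mpr ⟨le_rfl, lt_of_le_of_ne (hs.1 _) hbmem⟩
  have hpath := hs.2.2.1 _ hct _ hcb
  have key : ∀ y : ℕ × ℕ, Relation.ReflTransGen (fun x y => y ∈ Ptn.skew m l ∧ Adjacent x y)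
      (sInf (DSet m l), m.part (sInf (DSet m l))) y → y.1 < i := by
    intro y hy
    induction hy with
    | refl => exact ht
    | @tail x y hxy hstep ih =>
      obtain ⟨hyS, hadj⟩ := hstep
      have hyr : y.1 ≤ x.1 + 1 := by
        rcases hadj with ⟨e, _⟩ | ⟨_, e | e⟩ <;> omega
      have hyne : y.1 ≠ i := by
        intro e
        obtain ⟨ha, hb'⟩ := mem_skew.mp hyS
        rw [e] at ha hb'
        omega
      omega
  have hfin := key _ hpath
  simp only at hfin
  omega

lemma strip_step {r : ℕ} (hr : 0 < r) {m l : Ptn} (hs : IsBorderStrip r m l) {i : ℕ}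
    (h1 : sInf (DSet m l) ≤ i) (h2 : i < sSup (DSet m l)) : m.part i + 1 = l.part (i + 1) := by
  have hne := strip_ne hr hs
  have upper : l.part (i + 1) ≤ m.part i + 1 := by
    by_contra hcon
    push_neg at hcon
    have hc1 : ((i, m.part i) : ℕ × ℕ) ∈ Ptn.skew m l :=
      mem_skew.mpr ⟨le_rfl, strip_row_lt hr hs h1 (le_of_lt h2)⟩
    have hc2 : ((i + 1, m.part i + 1) : ℕ × ℕ) ∈ Ptn.skew m l :=
      mem_skew.mpr ⟨le_trans (m.2 (Nat.le_succ i)) (Nat.le_succ _), hcon⟩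
    exact hs.2.2.2 _ hc1 hc2
  have lower : m.part i < l.part (i + 1) := by
    by_contra hcon
    push_neg at hcon
    have htmem : m.part (sInf (DSet m l)) ≠ l.part (sInf (DSet m l)) :=
      Nat.sInf_mem (DSet_nonempty hne)
    have hbmem : m.part (sSup (DSet m l)) ≠ l.part (sSup (DSet m l)) :=
      Nat.sSup_mem (DSet_nonempty hne) (DSet_bdd m l)
    have hct : ((sInf (DSet m l), m.part (sInf (DSet m l))) : ℕ × ℕ) ∈ Ptn.skew m l :=
      mem_skew.mpr ⟨le_rfl, lt_of_le_of_ne (hs.1 _) htmem⟩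
    have hcb : ((sSup (DSet m l), m.part (sSup (DSet m l))) : ℕ × ℕ) ∈ Ptn.skew m l :=
      mem_skew.mpr ⟨le_rfl, lt_of_le_of_ne (hs.1 _) hbmem⟩
    have hpath := hs.2.2.1 _ hct _ hcb
    have key : ∀ y : ℕ × ℕ, Relation.ReflTransGen (fun x y => y ∈ Ptn.skew m l ∧ Adjacent x y)
        (sInf (DSet m l), m.part (sInf (DSet m l))) y → y ∈ Ptn.skew m l ∧ y.1 ≤ i := by
      intro y hy
      induction hy with
      | refl => exact ⟨hct, h1⟩
      | @tail x y hxy hstep ih =>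
        obtain ⟨hyS, hadj⟩ := hstep
        refine ⟨hyS, ?_⟩
        by_contra hyi
        push_neg at hyi
        obtain ⟨hxS, hxi⟩ := ih
        have hxx : x.1 = i ∧ y.1 = i + 1 ∧ x.2 = y.2 := by
          rcases hadj with ⟨e, _⟩ | ⟨e2, e | e⟩
          · omega
          · exact ⟨by omega, by omega, e2⟩
          · omega
        obtain ⟨hx1, hy1, hxy2⟩ := hxx
        obtain ⟨ha, _⟩ := mem_skew.mp hxS
        obtain ⟨_, hb'⟩ := mem_skew.mp hyS
        rw [hx1] at ha
        rw [hy1] at hb'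
        omega
    have hfin := (key _ hpath).2
    simp only at hfin
    omega
  omega

lemma size_eq_sum {l : Ptn} {K : ℕ} (h : ∀ i, K ≤ i → l.part i = 0) :
    l.size = ∑ i ∈ Finset.range K, l.part i := by
  rw [Ptn.size]
  apply Finsupp.sum_of_support_subset
  · intro i hi
    rw [Finset.mem_range]
    by_contra hK
    exact (Finsupp.mem_support_iff.mp hi) (h i (le_of_not_gt hK))
  · intro i _
    rfl

lemma strip_sum {r : ℕ} (hr : 0 < r) {m l : Ptn} (hs : IsBorderStrip r m l) :
    m.part (sSup (DSet m l)) + r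
      = l.part (sInf (DSet m l)) + (sSup (DSet m l) - sInf (DSet m l)) := by
  have hne := strip_ne hr hs
  have htb := strip_sInf_le_sSup hr hs
  have hbmem : m.part (sSup (DSet m l)) ≠ l.part (sSup (DSet m l)) :=
    Nat.sSup_mem (DSet_nonempty hne) (DSet_bdd m l)
  obtain ⟨K, hbK, hmK, hlK⟩ : ∃ K, sSup (DSet m l) < K ∧ (∀ i, K ≤ i → m.part i = 0) ∧
      ∀ i, K ≤ i → l.part i = 0 := by
    refine ⟨(m.1.support ∪ l.1.support).sup id + 1, ?_, ?_, ?_⟩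
    · by_contra hcon
      push_neg at hcon
      have hm0 : m.part (sSup (DSet m l)) = 0 := by
        by_contra hz
        have hmem : sSup (DSet m l) ∈ m.1.support := Finsupp.mem_support_iff.mpr hz
        have h2 : sSup (DSet m l) ≤ (m.1.support ∪ l.1.support).sup id :=
          Finset.le_sup (f := id) (Finset.mem_union_left _ hmem)
        omega
      have hl0 : l.part (sSup (DSet m l)) = 0 := by
        by_contra hz
        have hmem : sSup (DSet m l) ∈ l.1.support := Finsupp.mem_support_iff.mpr hz
        have h2 : sSup (DSet m l) ≤ (m.1.support ∪ l.1.support).sup id :=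
          Finset.le_sup (f := id) (Finset.mem_union_right _ hmem)
        omega
      exact hbmem (by rw [hm0, hl0])
    · intro i hi
      by_contra hz
      have hmem : i ∈ m.1.support := Finsupp.mem_support_iff.mpr hz
      have h2 : i ≤ (m.1.support ∪ l.1.support).sup id :=
        Finset.le_sup (f := id) (Finset.mem_union_left _ hmem)
      omega
    · intro i hi
      by_contra hz
      have hmem : i ∈ l.1.support := Finsupp.mem_support_iff.mpr hz
      have h2 : i ≤ (m.1.support ∪ l.1.support).sup id :=
        Finset.le_sup (f := id) (Finset.mem_union_right _ hmem)
      omega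
  have hIcc_sub : Finset.Icc (sInf (DSet m l)) (sSup (DSet m l)) ⊆ Finset.range K := by
    intro i hi
    rw [Finset.mem_Icc] at hi
    rw [Finset.mem_range]
    omega
  have hsdiff_l : ∑ i ∈ Finset.range K \ Finset.Icc (sInf (DSet m l)) (sSup (DSet m l)), l.part i
      + ∑ i ∈ Finset.Icc (sInf (DSet m l)) (sSup (DSet m l)), l.part i
      = ∑ i ∈ Finset.range K, l.part i := Finset.sum_sdiff hIcc_sub
  have hsdiff_m : ∑ i ∈ Finset.range K \ Finset.Icc (sInf (DSet m l)) (sSup (DSet m l)), m.part i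
      + ∑ i ∈ Finset.Icc (sInf (DSet m l)) (sSup (DSet m l)), m.part i
      = ∑ i ∈ Finset.range K, m.part i := Finset.sum_sdiff hIcc_sub
  have hout : ∑ i ∈ Finset.range K \ Finset.Icc (sInf (DSet m l)) (sSup (DSet m l)), l.part i
      = ∑ i ∈ Finset.range K \ Finset.Icc (sInf (DSet m l)) (sSup (DSet m l)), m.part i := by
    apply Finset.sum_congr rfl
    intro i hi
    rw [Finset.mem_sdiff, Finset.mem_Icc] at hi
    rcases Nat.lt_or_ge i (sInf (DSet m l)) with h | h
    · exact (eq_of_lt_sInf h).symm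
    · exact (eq_of_sSup_lt (by omega)).symm
  have hsz : ∑ i ∈ Finset.range K, l.part i = ∑ i ∈ Finset.range K, m.part i + r := by
    rw [← size_eq_sum hlK, ← size_eq_sum hmK]
    exact hs.2.1
  have key : ∀ j, sInf (DSet m l) ≤ j → j ≤ sSup (DSet m l) →
      ∑ i ∈ Finset.Icc (sInf (DSet m l)) j, l.part i + m.part j
      = ∑ i ∈ Finset.Icc (sInf (DSet m l)) j, m.part i + l.part (sInf (DSet m l))
          + (j - sInf (DSet m l)) := by
    intro j hj
    induction j, hj using Nat.le_induction with
    | base =>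
      intro _
      simp
      omega
    | succ j hj ih =>
      intro hjb
      have hl := Finset.sum_Icc_succ_top (a := sInf (DSet m l)) (b := j) (by omega)
        (fun i => l.part i)
      have hm := Finset.sum_Icc_succ_top (a := sInf (DSet m l)) (b := j) (by omega)
        (fun i => m.part i)
      have e1 := strip_step hr hs (i := j) hj (by omega)
      have ihh := ih (by omega)
      rw [hl, hm]
      omega
  have hfin := key (sSup (DSet m l)) htb le_rfl
  omega

lemma strip_unique {r : ℕ} (hr : 0 < r) {m m' l : Ptn} (hs : IsBorderStrip r m l)
    (hs' : IsBorderStrip r m' l) (ht : sInf (DSet m l) = sInf (DSet m' l)) : m = m' := by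
  have key : ∀ m m' : Ptn, IsBorderStrip r m l → IsBorderStrip r m' l →
      sInf (DSet m l) = sInf (DSet m' l) → sSup (DSet m l) ≤ sSup (DSet m' l) → m = m' := by
    clear hs hs' ht m m'
    intro m m' hs hs' ht hb
    have htb := strip_sInf_le_sSup hr hs
    have htb' := strip_sInf_le_sSup hr hs'
    have hsum := strip_sum hr hs
    have hsum' := strip_sum hr hs'
    rw [← ht] at hsum' htb'
    have hbb : sSup (DSet m l) = sSup (DSet m' l) := by
      by_contra hnb
      have hlt : sSup (DSet m l) < sSup (DSet m' l) := lt_of_le_of_ne hb hnb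
      have e3 : m'.part (sSup (DSet m l)) + 1 = l.part (sSup (DSet m l) + 1) :=
        strip_step hr hs' (by omega) hlt
      have e4 : m.part (sSup (DSet m l) + 1) = l.part (sSup (DSet m l) + 1) :=
        eq_of_sSup_lt (by omega)
      have e5 : m.part (sSup (DSet m l) + 1) ≤ m.part (sSup (DSet m l)) :=
        m.2 (Nat.le_succ _)
      have e6 : m'.part (sSup (DSet m' l)) ≤ m'.part (sSup (DSet m l)) := m'.2 hb
      omega
    apply Ptn.ext'
    intro i
    rcases Nat.lt_or_ge i (sInf (DSet m l)) with h | h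
    · rw [eq_of_lt_sInf h, eq_of_lt_sInf (show i < sInf (DSet m' l) by omega)]
    rcases Nat.lt_or_ge i (sSup (DSet m l)) with h2 | h2
    · have e1 := strip_step hr hs h h2
      have e2 := strip_step (i := i) hr hs' (by omega) (by omega)
      omega
    rcases Nat.eq_or_lt_of_le h2 with h3 | h3
    · rw [← h3, hbb]
      rw [hbb] at hsum
      omega
    · rw [eq_of_sSup_lt h3, eq_of_sSup_lt (show sSup (DSet m' l) < i by omega)]
  rcases le_total (sSup (DSet m l)) (sSup (DSet m' l)) with h | h
  · exact key m m' hs hs' ht h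
  · exact (key m' m hs' hs ht.symm h).symm

lemma chain_sub {r : ℕ} {d : ℕ} {γ : ℕ → Ptn}
    (hstrip : ∀ i < d, IsBorderStrip r (γ i) (γ (i + 1))) :
    ∀ i j, i ≤ j → j ≤ d → Ptn.Sub (γ i) (γ j) := by
  intro i j hij
  induction j, hij using Nat.le_induction with
  | base => intro _ k; exact le_rfl
  | succ j hj ih =>
    intro hjd k
    exact le_trans (ih (by omega) k) ((hstrip j (by omega)).1 k)

lemma chain_size {r : ℕ} {d : ℕ} {γ : ℕ → Ptn}
    (hstrip : ∀ i < d, IsBorderStrip r (γ i) (γ (i + 1))) :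
    ∀ i ≤ d, (γ i).size = (γ 0).size + i * r := by
  intro i
  induction i with
  | zero => intro _; simp
  | succ i ih =>
    intro hi
    have h1 := (hstrip i (by omega)).2.1
    rw [h1, ih (by omega)]
    ring

lemma chain_top {r : ℕ} (hr : 0 < r) {d : ℕ} {mu lam : Ptn} {γ : ℕ → Ptn}
    (h : RChain r mu lam (d + 1) γ) :
    sInf (DSet (γ d) lam) = sInf (DSet mu lam) := by
  obtain ⟨h0, hdl, hstrip, htops⟩ := h
  subst hdl
  subst h0
  have hsub := chain_sub hstrip
  have hmne : γ 0 ≠ γ (d + 1) := by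
    have hsz := chain_size hstrip (d + 1) le_rfl
    intro e
    rw [← e] at hsz
    have hpos : 0 < (d + 1) * r := Nat.mul_pos (by omega) hr
    omega
  have htmem : (γ 0).part (sInf (DSet (γ 0) (γ (d + 1))))
      ≠ (γ (d + 1)).part (sInf (DSet (γ 0) (γ (d + 1)))) := Nat.sInf_mem (DSet_nonempty hmne)
  have hexj : ∃ j < d + 1,
      (γ j).part (sInf (DSet (γ 0) (γ (d + 1))))
        ≠ (γ (j + 1)).part (sInf (DSet (γ 0) (γ (d + 1)))) := by
    by_contra hc
    push_neg at hc
    have hall : ∀ j ≤ d + 1, (γ j).part (sInf (DSet (γ 0) (γ (d + 1))))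
        = (γ 0).part (sInf (DSet (γ 0) (γ (d + 1)))) := by
      intro j
      induction j with
      | zero => intro _; rfl
      | succ j ih =>
        intro hj
        rw [← hc j (by omega), ih (by omega)]
    exact htmem (hall (d + 1) le_rfl).symm
  obtain ⟨j, hj, hjt⟩ := hexj
  have h1 : sInf (DSet (γ j) (γ (j + 1))) ≤ sInf (DSet (γ 0) (γ (d + 1))) :=
    Nat.sInf_le (show _ ∈ DSet (γ j) (γ (j + 1)) from hjt)
  have h2 : ∀ k, j ≤ k → k ≤ d →
      sInf (DSet (γ k) (γ (k + 1))) ≤ sInf (DSet (γ j) (γ (j + 1))) := by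
    intro k hk
    induction k, hk using Nat.le_induction with
    | base => intro _; exact le_rfl
    | succ k hk ih =>
      intro hkd
      have hne1 : γ (k + 1) ≠ γ (k + 2) := strip_ne hr (hstrip (k + 1) (by omega))
      have hne2 : γ k ≠ γ (k + 1) := strip_ne hr (hstrip k (by omega))
      have hcond : sInf (DSet (γ (k + 1)) (γ (k + 1 + 1))) + 1
          ≤ sInf (DSet (γ k) (γ (k + 1))) + 1 := by
        have hc := htops k (by omega)
        rw [Ptn.top, Ptn.top, if_neg hne1, if_neg hne2] at hc
        exact hc
      have ihh := ih (by omega)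
      omega
  have h3 : sInf (DSet (γ 0) (γ (d + 1))) ≤ sInf (DSet (γ d) (γ (d + 1))) := by
    apply le_csInf (DSet_nonempty (strip_ne hr (hstrip d (by omega))))
    intro i hi
    by_contra hit
    push_neg at hit
    have e1 : (γ 0).part i = (γ (d + 1)).part i := eq_of_lt_sInf hit
    have s1 := hsub 0 d (by omega) (by omega) i
    have s2 := hsub d (d + 1) (by omega) le_rfl i
    exact (show i ∈ DSet (γ d) (γ (d + 1)) from hi) (by omega)
  exact le_antisymm (le_trans (h2 d (by omega) (by omega)) h1) h3

lemma rchain_unique_aux (r : ℕ) (hr : 0 < r) :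
    ∀ (d : ℕ) (mu lam : Ptn) (γ₁ γ₂ : ℕ → Ptn),
      RChain r mu lam d γ₁ → RChain r mu lam d γ₂ → ∀ i ≤ d, γ₁ i = γ₂ i := by
  intro d
  induction d with
  | zero =>
    intro mu lam γ₁ γ₂ h₁ h₂ i hi
    have hi0 : i = 0 := Nat.le_zero.mp hi
    subst hi0
    rw [h₁.1, h₂.1]
  | succ d ih =>
    intro mu lam γ₁ γ₂ h₁ h₂ i hi
    have hs1 : IsBorderStrip r (γ₁ d) lam := by
      have hh := h₁.2.2.1 d (Nat.lt_succ_self d)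
      rwa [h₁.2.1] at hh
    have hs2 : IsBorderStrip r (γ₂ d) lam := by
      have hh := h₂.2.2.1 d (Nat.lt_succ_self d)
      rwa [h₂.2.1] at hh
    have hE1 := chain_top hr h₁
    have hE2 := chain_top hr h₂
    have hν : γ₁ d = γ₂ d := strip_unique hr hs1 hs2 (hE1.trans hE2.symm)
    rcases Nat.eq_or_lt_of_le hi with h | h
    · rw [h, h₁.2.1, h₂.2.1]
    · have hc1 : RChain r mu (γ₁ d) d γ₁ :=
        ⟨h₁.1, rfl, fun j hj => h₁.2.2.1 j (by omega), fun j hj => h₁.2.2.2 j (by omega)⟩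
      have hc2 : RChain r mu (γ₁ d) d γ₂ :=
        ⟨h₂.1, hν.symm, fun j hj => h₂.2.2.1 j (by omega), fun j hj => h₂.2.2.2 j (by omega)⟩
      exact ih mu (γ₁ d) γ₁ γ₂ hc1 hc2 i (by omega)

end RChainUnique

/-- **Uniqueness of the `r`-decomposition**: the chain `μ = γ⁽⁰⁾ ⊆ … ⊆ γ⁽ᵈ⁾ = λ` of
`r`-border strips with non-increasing tops witnessing `r`-decomposability is unique; in
particular `d = (|λ| - |μ|)/r`. -/
theorem rchain_unique (r : ℕ) (hr : 0 < r) (mu lam : Ptn) (d₁ d₂ : ℕ)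
    (γ₁ γ₂ : ℕ → Ptn) (h₁ : RChain r mu lam d₁ γ₁) (h₂ : RChain r mu lam d₂ γ₂) :
    d₁ = d₂ ∧ (∀ i ≤ d₁, γ₁ i = γ₂ i) ∧ mu.size + d₁ * r = lam.size := by
  have hsz1 := chain_size h₁.2.2.1 d₁ le_rfl
  have hsz2 := chain_size h₂.2.2.1 d₂ le_rfl
  rw [h₁.1, h₁.2.1] at hsz1
  rw [h₂.1, h₂.2.1] at hsz2
  have hd : d₁ = d₂ := Nat.eq_of_mul_eq_mul_right hr (by omega)
  subst hd
  exact ⟨rfl, fun i hi => rchain_unique_aux r hr d₁ mu lam γ₁ γ₂ h₁ h₂ i hi, by omega⟩
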